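/- arXiv:2009.09383 — 2 statements merged into one kernel-verified Lean document; each statement's English description precedes it below -/
import Mathlib

section
/- The function F(a) = E(f_a) given by the minimal constrained Dirichlet energy of discrete maps into the rectangle [0,a⁻¹]×[0,a] satisfies F(a) = A·a⁻² + B·a² for constants A,B ≥ 0 depending only on the graph, weights and boundary sets, where A is the minimal energy of the horizontal coordinate with boundary values 0 on V₄ and 1 on V₂, and B is the minimal energy of the vertical coordinate with boundary values 0 on V₁ and 1 on V₃; consequently if A,B > 0, F attains its unique minimum at a = (A/B)^{1/4}. -/
open Finset

/-- Discrete Dirichlet energy for scalar functions on a weighted graph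
(`1/2` over unordered edges, i.e. `1/4` over ordered adjacent pairs). -/
noncomputable def scalarEnergy {V : Type*} [Fintype V] (G : SimpleGraph V)
    [DecidableRel G.Adj] (w : V → V → ℝ) (u : V → ℝ) : ℝ :=
  (1/4) * ∑ i, ∑ j, if G.Adj i j then w i j * (u j - u i) ^ 2 else 0

/-- Discrete Dirichlet energy for `ℝ²`-valued maps. -/
noncomputable def vecEnergy {V : Type*} [Fintype V] (G : SimpleGraph V)
    [DecidableRel G.Adj] (w : V → V → ℝ)
    (f : V → EuclideanSpace ℝ (Fin 2)) : ℝ :=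
  (1/4) * ∑ i, ∑ j, if G.Adj i j then w i j * ‖f j - f i‖ ^ 2 else 0

/-- Constraints mapping the boundary sets into the four sides of `[0,a⁻¹]×[0,a]`. -/
def rectConstraint {V : Type*} (V₁ V₂ V₃ V₄ : Set V) (a : ℝ)
    (f : V → EuclideanSpace ℝ (Fin 2)) : Prop :=
  (∀ i ∈ V₁, f i 1 = 0) ∧ (∀ i ∈ V₂, f i 0 = a⁻¹) ∧
  (∀ i ∈ V₃, f i 1 = a) ∧ (∀ i ∈ V₄, f i 0 = 0)

section Aux
variable {V : Type*} [Fintype V] (G : SimpleGraph V) [DecidableRel G.Adj] (w : V → V → ℝ)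

lemma norm_sq_fin2 (x : EuclideanSpace ℝ (Fin 2)) : ‖x‖ ^ 2 = x 0 ^ 2 + x 1 ^ 2 := by
  rw [EuclideanSpace.norm_eq, Real.sq_sqrt (by positivity)]
  simp [Fin.sum_univ_two, sq_abs]

lemma scalarEnergy_nonneg (hw_pos : ∀ i j, G.Adj i j → 0 < w i j) (u : V → ℝ) :
    0 ≤ scalarEnergy G w u := by
  unfold scalarEnergy
  apply mul_nonneg (by norm_num)
  refine Finset.sum_nonneg fun i _ => Finset.sum_nonneg fun j _ => ?_
  split
  · exact mul_nonneg (hw_pos _ _ ‹_›).le (sq_nonneg _)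
  · exact le_rfl

lemma vecEnergy_split (f : V → EuclideanSpace ℝ (Fin 2)) :
    vecEnergy G w f
      = scalarEnergy G w (fun i => f i 0) + scalarEnergy G w (fun i => f i 1) := by
  unfold vecEnergy scalarEnergy
  rw [← mul_add, ← Finset.sum_add_distrib]
  congr 1
  refine Finset.sum_congr rfl fun i _ => ?_
  rw [← Finset.sum_add_distrib]
  refine Finset.sum_congr rfl fun j _ => ?_
  by_cases h : G.Adj i j
  · simp only [if_pos h, norm_sq_fin2 (f j - f i)]
    have h0 : (f j - f i) 0 = f j 0 - f i 0 := rfl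
    have h1 : (f j - f i) 1 = f j 1 - f i 1 := rfl
    rw [h0, h1]; ring
  · simp [h]

lemma scalarEnergy_smul (c : ℝ) (u : V → ℝ) :
    scalarEnergy G w (fun i => c * u i) = c ^ 2 * scalarEnergy G w u := by
  unfold scalarEnergy
  have h : ∀ i j : V, (if G.Adj i j then w i j * (c * u j - c * u i) ^ 2 else 0)
      = c ^ 2 * (if G.Adj i j then w i j * (u j - u i) ^ 2 else 0) := by
    intro i j; by_cases h : G.Adj i j <;> simp [h] <;> ring
  simp only [h, ← Finset.mul_sum]
  ring

lemma vecEnergy_nonneg (hw_pos : ∀ i j, G.Adj i j → 0 < w i j)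
    (f : V → EuclideanSpace ℝ (Fin 2)) : 0 ≤ vecEnergy G w f := by
  rw [vecEnergy_split]
  exact add_nonneg (scalarEnergy_nonneg G w hw_pos _) (scalarEnergy_nonneg G w hw_pos _)

end Aux

/-- The minimal constrained discrete Dirichlet energy
`F(a)` into the rectangle `[0,a⁻¹]×[0,a]` satisfies `F(a) = A a⁻² + B a²`, where
`A` (resp. `B`) is the minimal scalar energy with boundary values `0` on `V₄`, `1`
on `V₂` (resp. `0` on `V₁`, `1` on `V₃`); `A, B ≥ 0`, and if `A, B > 0` then `F`
attains its unique minimum over `a > 0` at `a = (A/B)^{1/4}`. -/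
theorem rectangle_energy_profile
    {V : Type*} [Fintype V] [DecidableEq V]
    (G : SimpleGraph V) [DecidableRel G.Adj] (hconn : G.Connected)
    (w : V → V → ℝ) (hw_symm : ∀ i j, w i j = w j i)
    (hw_pos : ∀ i j, G.Adj i j → 0 < w i j)
    (V₁ V₂ V₃ V₄ : Set V) (h13 : V₁ ∩ V₃ = ∅) (h24 : V₂ ∩ V₄ = ∅)
    (h1 : V₁.Nonempty) (h2 : V₂.Nonempty) (h3 : V₃.Nonempty) (h4 : V₄.Nonempty)
    (A B : ℝ) (F : ℝ → ℝ)
    (hA : A = sInf (scalarEnergy G w ''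
      {u | (∀ i ∈ V₄, u i = 0) ∧ ∀ i ∈ V₂, u i = 1}))
    (hB : B = sInf (scalarEnergy G w ''
      {u | (∀ i ∈ V₁, u i = 0) ∧ ∀ i ∈ V₃, u i = 1}))
    (hF : ∀ a, F a = sInf (vecEnergy G w ''
      {f | rectConstraint V₁ V₂ V₃ V₄ a f})) :
    0 ≤ A ∧ 0 ≤ B ∧
    (∀ a : ℝ, 0 < a → F a = A * (a ^ 2)⁻¹ + B * a ^ 2) ∧
    (0 < A → 0 < B →
      (∀ a : ℝ, 0 < a → F ((A / B) ^ ((1 : ℝ) / 4)) ≤ F a) ∧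
      (∀ a : ℝ, 0 < a → F a = F ((A / B) ^ ((1 : ℝ) / 4)) →
        a = (A / B) ^ ((1 : ℝ) / 4))) := by
  classical
  set SetA : Set (V → ℝ) := {u | (∀ i ∈ V₄, u i = 0) ∧ ∀ i ∈ V₂, u i = 1} with hSetA
  set SetB : Set (V → ℝ) := {u | (∀ i ∈ V₁, u i = 0) ∧ ∀ i ∈ V₃, u i = 1} with hSetB
  -- lower bound 0 for the scalar image sets
  have hSA0 : ∀ x ∈ scalarEnergy G w '' SetA, (0:ℝ) ≤ x := by
    rintro x ⟨u, -, rfl⟩; exact scalarEnergy_nonneg G w hw_pos u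
  have hSB0 : ∀ x ∈ scalarEnergy G w '' SetB, (0:ℝ) ≤ x := by
    rintro x ⟨u, -, rfl⟩; exact scalarEnergy_nonneg G w hw_pos u
  have hSAbdd : BddBelow (scalarEnergy G w '' SetA) := ⟨0, hSA0⟩
  have hSBbdd : BddBelow (scalarEnergy G w '' SetB) := ⟨0, hSB0⟩
  -- nonemptiness witnesses
  have huA : (fun i => if i ∈ V₂ then (1:ℝ) else 0) ∈ SetA := by
    constructor
    · intro i hi
      have hni : i ∉ V₂ := fun h' => Set.eq_empty_iff_forall_notMem.1 h24 i ⟨h', hi⟩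
      simp [hni]
    · intro i hi; simp [hi]
  have huB : (fun i => if i ∈ V₃ then (1:ℝ) else 0) ∈ SetB := by
    constructor
    · intro i hi
      have hni : i ∉ V₃ := fun h' => Set.eq_empty_iff_forall_notMem.1 h13 i ⟨hi, h'⟩
      simp [hni]
    · intro i hi; simp [hi]
  have hSAne : (scalarEnergy G w '' SetA).Nonempty := ⟨_, ⟨_, huA, rfl⟩⟩
  have hSBne : (scalarEnergy G w '' SetB).Nonempty := ⟨_, ⟨_, huB, rfl⟩⟩
  have hA0 : 0 ≤ A := hA ▸ le_csInf hSAne hSA0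
  have hB0 : 0 ≤ B := hB ▸ le_csInf hSBne hSB0
  -- key formula
  have key : ∀ a : ℝ, 0 < a → F a = A * (a ^ 2)⁻¹ + B * a ^ 2 := by
    intro a ha
    have hane : a ≠ 0 := ha.ne'
    have ha2 : (0:ℝ) < a ^ 2 := by positivity
    have ha2i : (0:ℝ) < (a ^ 2)⁻¹ := by positivity
    -- building a vector map from two scalar maps
    have build : ∀ u ∈ SetA, ∀ v ∈ SetB,
        (a ^ 2)⁻¹ * scalarEnergy G w u + a ^ 2 * scalarEnergy G w v
          ∈ vecEnergy G w '' {f | rectConstraint V₁ V₂ V₃ V₄ a f} := by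
      rintro u ⟨hu4, hu2⟩ v ⟨hv1, hv3⟩
      refine ⟨fun i => (WithLp.equiv 2 (Fin 2 → ℝ)).symm ![a⁻¹ * u i, a * v i],
        ⟨?_, ?_, ?_, ?_⟩, ?_⟩
      · intro i hi; show a * v i = 0; rw [hv1 i hi, mul_zero]
      · intro i hi; show a⁻¹ * u i = a⁻¹; rw [hu2 i hi, mul_one]
      · intro i hi; show a * v i = a; rw [hv3 i hi, mul_one]
      · intro i hi; show a⁻¹ * u i = 0; rw [hu4 i hi, mul_zero]
      · rw [vecEnergy_split]
        have e0 : (fun i => ((WithLp.equiv 2 (Fin 2 → ℝ)).symm ![a⁻¹ * u i, a * v i] : EuclideanSpace ℝ (Fin 2)) 0) = fun i => a⁻¹ * u i := rfl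
        have e1 : (fun i => ((WithLp.equiv 2 (Fin 2 → ℝ)).symm ![a⁻¹ * u i, a * v i] : EuclideanSpace ℝ (Fin 2)) 1) = fun i => a * v i := rfl
        rw [e0, e1, scalarEnergy_smul, scalarEnergy_smul, inv_pow]
    -- the vector image set
    have hT0 : ∀ x ∈ vecEnergy G w '' {f | rectConstraint V₁ V₂ V₃ V₄ a f}, (0:ℝ) ≤ x := by
      rintro x ⟨f, -, rfl⟩; exact vecEnergy_nonneg G w hw_pos f
    have hTbdd : BddBelow (vecEnergy G w '' {f | rectConstraint V₁ V₂ V₃ V₄ a f}) := ⟨0, hT0⟩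
    have hTne : (vecEnergy G w '' {f | rectConstraint V₁ V₂ V₃ V₄ a f}).Nonempty :=
      ⟨_, build _ huA _ huB⟩
    rw [hF a]
    apply le_antisymm
    · -- upper bound on the infimum
      have step1 : ∀ u ∈ SetA, ∀ v ∈ SetB,
          sInf (vecEnergy G w '' {f | rectConstraint V₁ V₂ V₃ V₄ a f})
            ≤ (a ^ 2)⁻¹ * scalarEnergy G w u + a ^ 2 * scalarEnergy G w v :=
        fun u hu v hv => csInf_le hTbdd (build u hu v hv)
      set S := sInf (vecEnergy G w '' {f | rectConstraint V₁ V₂ V₃ V₄ a f}) with hS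
      have step2 : ∀ v ∈ SetB, S ≤ A * (a ^ 2)⁻¹ + a ^ 2 * scalarEnergy G w v := by
        intro v hv
        have hlb : (S - a ^ 2 * scalarEnergy G w v) * a ^ 2 ≤ A := by
          rw [hA]
          refine le_csInf hSAne ?_
          rintro x ⟨u, hu, rfl⟩
          have h' := step1 u hu v hv
          have : (S - a ^ 2 * scalarEnergy G w v) ≤ (a ^ 2)⁻¹ * scalarEnergy G w u := by
            linarith
          calc (S - a ^ 2 * scalarEnergy G w v) * a ^ 2
              ≤ ((a ^ 2)⁻¹ * scalarEnergy G w u) * a ^ 2 :=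
                mul_le_mul_of_nonneg_right this ha2.le
            _ = scalarEnergy G w u := by field_simp
        have := mul_le_mul_of_nonneg_right hlb ha2i.le
        rw [mul_assoc, mul_inv_cancel₀ ha2.ne', mul_one] at this
        linarith
      have hlb2 : (S - A * (a ^ 2)⁻¹) * (a ^ 2)⁻¹ ≤ B := by
        rw [hB]
        refine le_csInf hSBne ?_
        rintro x ⟨v, hv, rfl⟩
        have h' := step2 v hv
        have : S - A * (a ^ 2)⁻¹ ≤ a ^ 2 * scalarEnergy G w v := by linarith
        calc (S - A * (a ^ 2)⁻¹) * (a ^ 2)⁻¹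
            ≤ (a ^ 2 * scalarEnergy G w v) * (a ^ 2)⁻¹ :=
              mul_le_mul_of_nonneg_right this ha2i.le
          _ = scalarEnergy G w v := by field_simp
      have := mul_le_mul_of_nonneg_right hlb2 ha2.le
      rw [mul_assoc, inv_mul_cancel₀ ha2.ne', mul_one] at this
      linarith
    · -- lower bound on the infimum
      refine le_csInf hTne ?_
      rintro x ⟨f, ⟨hf1, hf2, hf3, hf4⟩, rfl⟩
      have huSA : (fun i => a * f i 0) ∈ SetA := by
        constructor
        · intro i hi; show a * f i 0 = 0; rw [hf4 i hi, mul_zero]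
        · intro i hi; show a * f i 0 = 1; rw [hf2 i hi, mul_inv_cancel₀ hane]
      have hvSB : (fun i => a⁻¹ * f i 1) ∈ SetB := by
        constructor
        · intro i hi; show a⁻¹ * f i 1 = 0; rw [hf1 i hi, mul_zero]
        · intro i hi; show a⁻¹ * f i 1 = 1; rw [hf3 i hi, inv_mul_cancel₀ hane]
      have hu : A ≤ scalarEnergy G w (fun i => a * f i 0) := by
        rw [hA]; exact csInf_le hSAbdd ⟨_, huSA, rfl⟩
      have hv : B ≤ scalarEnergy G w (fun i => a⁻¹ * f i 1) := by
        rw [hB]; exact csInf_le hSBbdd ⟨_, hvSB, rfl⟩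
      rw [scalarEnergy_smul] at hu
      rw [scalarEnergy_smul, inv_pow] at hv
      rw [vecEnergy_split]
      set E0 := scalarEnergy G w (fun i => f i 0)
      set E1 := scalarEnergy G w (fun i => f i 1)
      have hE0 : A * (a ^ 2)⁻¹ ≤ E0 := by
        have := mul_le_mul_of_nonneg_right hu ha2i.le
        rwa [mul_comm (a ^ 2) E0, mul_assoc, mul_inv_cancel₀ ha2.ne', mul_one] at this
      have hE1 : B * a ^ 2 ≤ E1 := by
        have := mul_le_mul_of_nonneg_right hv ha2.le
        rwa [mul_comm ((a ^ 2)⁻¹) E1, mul_assoc, inv_mul_cancel₀ ha2.ne', mul_one] at this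
      linarith
  refine ⟨hA0, hB0, key, ?_⟩
  intro hA' hB'
  set c : ℝ := (A / B) ^ ((1 : ℝ) / 4) with hcdef
  have hABpos : 0 < A / B := div_pos hA' hB'
  have hc : 0 < c := Real.rpow_pos_of_pos hABpos _
  have hc4 : c ^ 2 * c ^ 2 = A / B := by
    have h4 : c ^ (4:ℕ) = A / B := by
      rw [hcdef, ← Real.rpow_natCast ((A / B) ^ ((1:ℝ)/4)) 4, ← Real.rpow_mul hABpos.le]
      norm_num
    calc c ^ 2 * c ^ 2 = c ^ (4:ℕ) := by ring
      _ = A / B := h4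
  have hAeq : A = B * (c ^ 2 * c ^ 2) := by
    rw [hc4]; field_simp
  have diff : ∀ a : ℝ, 0 < a → F a - F c = B * (a ^ 2 - c ^ 2) ^ 2 / a ^ 2 := by
    intro a ha
    rw [key a ha, key c hc, hAeq]
    have h1 : a ≠ 0 := ha.ne'
    have h2 : c ≠ 0 := hc.ne'
    field_simp
    ring
  constructor
  · intro a ha
    have hd := diff a ha
    have hnn : 0 ≤ B * (a ^ 2 - c ^ 2) ^ 2 / a ^ 2 := by positivity
    linarith
  · intro a ha heq
    have hd := diff a ha
    rw [heq, sub_self] at hd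
    have hz : a ^ 2 - c ^ 2 = 0 := by
      by_contra hne
      have hpos : 0 < B * (a ^ 2 - c ^ 2) ^ 2 / a ^ 2 := by positivity
      linarith
    have hsq : a ^ 2 = c ^ 2 := by linarith
    calc a = Real.sqrt (a ^ 2) := (Real.sqrt_sq ha.le).symm
      _ = Real.sqrt (c ^ 2) := by rw [hsq]
      _ = c := Real.sqrt_sq hc.le
end

section
/- On the hyperboloid model H = {(x,y,z) ∈ ℝ³ : z² - x² - y² = 1, z > 0}, given points p₁,...,pₙ ∈ H, the point c = π_H((p₁+⋯+pₙ)/n), where π_H is the radial projection onto H (scaling by the positive factor making the Minkowski norm -1), is the unique point of H satisfying ∑_{k=1}^n sinh(d_H(c,p_k))·e(c,p_k) = 0, where d_H is hyperbolic distance and e(c,p_k) is the unit tangent vector at c pointing toward p_k. -/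
open Finset

/-- The Minkowski bilinear form `⟨u,v⟩ = u₁v₁ + u₂v₂ - u₃v₃` on `ℝ³`. -/
def mink (u v : Fin 3 → ℝ) : ℝ := u 0 * v 0 + u 1 * v 1 - u 2 * v 2

/-- The hyperboloid model `H = {(x,y,z) : z² - x² - y² = 1, z > 0}`. -/
def Hyp : Set (Fin 3 → ℝ) := {p | mink p p = -1 ∧ 0 < p 2}

/-- The inverse hyperbolic cosine, `arcosh x = log (x + √(x²-1))` for `x ≥ 1`. -/
noncomputable def arcosh (x : ℝ) : ℝ := Real.log (x + Real.sqrt (x ^ 2 - 1))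

/-- Hyperbolic distance on the hyperboloid: `cosh d(p,q) = -⟨p,q⟩`. -/
noncomputable def dH (p q : Fin 3 → ℝ) : ℝ := arcosh (-(mink p q))

/-- The unit tangent vector at `c` pointing toward `p` (junk value `0` if `p = c`). -/
noncomputable def unitTangent (c p : Fin 3 → ℝ) : Fin 3 → ℝ :=
  (Real.sinh (dH c p))⁻¹ • (p + mink c p • c)

/-- The radial projection onto the hyperboloid, `π_H(v) = v/√(-⟨v,v⟩)`. -/
noncomputable def projH (v : Fin 3 → ℝ) : Fin 3 → ℝ :=
  (Real.sqrt (-(mink v v)))⁻¹ • v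

/-!
For `c, p ∈ H` the vector `sinh d(c,p) • e(c,p)` is the Minkowski-orthogonal projection
`p + ⟨c,p⟩ c` of `p` to the tangent plane at `c`. Summing over `k`, the balance condition at `c`
reads `S + ⟨c,S⟩ c = 0` with `S = p₁ + ⋯ + pₙ`, i.e. `S` is a positive multiple of `c`; since `S`
is future timelike, this happens for exactly one point of `H`, namely `π_H(S) = π_H(S/n)`.
-/

lemma mink_comm (u v : Fin 3 → ℝ) : mink u v = mink v u := by
  simp only [mink]; ring

lemma mink_smul_left (a : ℝ) (u v : Fin 3 → ℝ) : mink (a • u) v = a * mink u v := by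
  simp only [mink, Pi.smul_apply, smul_eq_mul]; ring

lemma mink_smul_right (a : ℝ) (u v : Fin 3 → ℝ) : mink u (a • v) = a * mink u v := by
  rw [mink_comm, mink_smul_left, mink_comm]

lemma mink_sum_right {ι : Type*} (s : Finset ι) (u : Fin 3 → ℝ) (f : ι → Fin 3 → ℝ) :
    mink u (∑ k ∈ s, f k) = ∑ k ∈ s, mink u (f k) := by
  simp only [mink, Finset.sum_apply, Finset.mul_sum, ← Finset.sum_add_distrib,
    ← Finset.sum_sub_distrib]

lemma mink_sum_left {ι : Type*} (s : Finset ι) (f : ι → Fin 3 → ℝ) (u : Fin 3 → ℝ) :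
    mink (∑ k ∈ s, f k) u = ∑ k ∈ s, mink (f k) u := by
  simp only [mink_comm _ u, mink_sum_right]

/-- The reverse Cauchy–Schwarz inequality on the hyperboloid. -/
lemma mink_le_neg_one_of_mem_Hyp {p q : Fin 3 → ℝ} (hp : p ∈ Hyp) (hq : q ∈ Hyp) :
    mink p q ≤ -1 := by
  obtain ⟨hpp, hp2⟩ := hp
  obtain ⟨hqq, hq2⟩ := hq
  simp only [mink] at *
  nlinarith [sq_nonneg (p 0 - q 0), sq_nonneg (p 1 - q 1), sq_nonneg (p 0 * q 1 - p 1 * q 0),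
    mul_pos hp2 hq2, sq_nonneg (p 2 - q 2), sq_nonneg (p 2 + q 2)]

lemma eq_of_mink_eq_neg_one {p q : Fin 3 → ℝ} (hp : p ∈ Hyp) (hq : q ∈ Hyp)
    (h : mink p q = -1) : p = q := by
  obtain ⟨hpp, hp2⟩ := hp
  obtain ⟨hqq, hq2⟩ := hq
  simp only [mink] at *
  have hsq : (p 0 - q 0) ^ 2 + (p 1 - q 1) ^ 2 + (p 0 * q 1 - p 1 * q 0) ^ 2 = 0 := by
    nlinarith [sq_nonneg (p 2 * q 2)]
  have h0 : p 0 = q 0 := by nlinarith [sq_nonneg (p 1 - q 1), sq_nonneg (p 0 * q 1 - p 1 * q 0)]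
  have h1 : p 1 = q 1 := by nlinarith [sq_nonneg (p 0 - q 0), sq_nonneg (p 0 * q 1 - p 1 * q 0)]
  have h2 : p 2 = q 2 := by nlinarith
  funext i
  fin_cases i <;> assumption

lemma mink_sum_neg_of_mem_Hyp {ι : Type*} [Fintype ι] [Nonempty ι] {q : Fin 3 → ℝ}
    (hq : q ∈ Hyp) {p : ι → Fin 3 → ℝ} (hp : ∀ k, p k ∈ Hyp) : mink q (∑ k, p k) < 0 := by
  rw [mink_sum_right]
  exact Finset.sum_neg (fun k _ => (mink_le_neg_one_of_mem_Hyp hq (hp k)).trans_lt (by norm_num))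
    Finset.univ_nonempty

lemma sinh_dH_smul_unitTangent {c p : Fin 3 → ℝ} (hc : c ∈ Hyp) (hp : p ∈ Hyp) :
    Real.sinh (dH c p) • unitTangent c p = p + mink c p • c := by
  rcases (mink_le_neg_one_of_mem_Hyp hc hp).lt_or_eq with hlt | heq
  · have hdist : 0 < dH c p := Real.arcosh_pos (by linarith)
    rw [unitTangent, smul_smul, mul_inv_cancel₀ (Real.sinh_pos_iff.mpr hdist).ne', one_smul]
  · obtain rfl := (eq_of_mink_eq_neg_one hc hp heq).symm
    have hdist : dH p p = 0 := by rw [dH, heq, neg_neg]; exact Real.arcosh_zero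
    rw [hdist, heq, Real.sinh_zero, zero_smul, neg_one_smul, add_neg_cancel]

lemma sum_sinh_dH_smul_unitTangent {ι : Type*} [Fintype ι] {c : Fin 3 → ℝ} (hc : c ∈ Hyp)
    {p : ι → Fin 3 → ℝ} (hp : ∀ k, p k ∈ Hyp) :
    ∑ k, Real.sinh (dH c (p k)) • unitTangent c (p k) = ∑ k, p k + mink c (∑ k, p k) • c := by
  simp only [sinh_dH_smul_unitTangent hc (hp _), Finset.sum_add_distrib, ← Finset.sum_smul,
    mink_sum_right]

lemma projH_smul_of_pos {a : ℝ} (ha : 0 < a) (v : Fin 3 → ℝ) : projH (a • v) = projH v := by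
  have hsqrt : Real.sqrt (-mink (a • v) (a • v)) = a * Real.sqrt (-mink v v) := by
    rw [mink_smul_left, mink_smul_right, show -(a * (a * mink v v)) = a ^ 2 * -mink v v by ring,
      Real.sqrt_mul (sq_nonneg a), Real.sqrt_sq ha.le]
  rw [projH, projH, hsqrt, smul_smul, mul_inv, mul_comm a⁻¹, mul_assoc, inv_mul_cancel₀ ha.ne',
    mul_one]

lemma projH_eq_self_of_mem_Hyp {c : Fin 3 → ℝ} (hc : c ∈ Hyp) : projH c = c := by
  rw [projH, hc.1, neg_neg, Real.sqrt_one, inv_one, one_smul]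

lemma projH_mem_Hyp {v : Fin 3 → ℝ} (hvv : mink v v < 0) (hv2 : 0 < v 2) : projH v ∈ Hyp := by
  have hsqrt : 0 < Real.sqrt (-mink v v) := Real.sqrt_pos.mpr (neg_pos.mpr hvv)
  refine ⟨?_, mul_pos (inv_pos.mpr hsqrt) hv2⟩
  rw [projH, mink_smul_left, mink_smul_right, ← mul_assoc, ← mul_inv,
    Real.mul_self_sqrt (neg_pos.mpr hvv).le]
  field_simp [hvv.ne]

lemma add_mink_smul_eq_zero_iff {c v : Fin 3 → ℝ} (hc : c ∈ Hyp) (hcv : mink c v < 0) :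
    v + mink c v • c = 0 ↔ c = projH v := by
  constructor
  · intro h
    have hv : v = (-mink c v) • c := by rw [neg_smul]; exact eq_neg_of_add_eq_zero_left h
    rw [hv, projH_smul_of_pos (neg_pos.mpr hcv), projH_eq_self_of_mem_Hyp hc]
  · intro h
    set a := (Real.sqrt (-mink v v))⁻¹
    have hcav : c = a • v := h
    have ha : a * (a * mink v v) = -1 := by
      rw [← hc.1, hcav, mink_smul_left, mink_smul_right]
    rw [hcav, mink_smul_left, smul_smul, mul_comm, ← mul_assoc, ← mul_comm a, mul_assoc, ha,
      neg_one_smul, add_neg_cancel]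

/-- For points `p₁,…,pₙ` on the hyperboloid `H`, the point
`c = π_H((p₁+⋯+pₙ)/n)` lies on `H` and is the unique point of `H` satisfying
the balance condition `∑ₖ sinh(d_H(c,pₖ)) • e(c,pₖ) = 0`. -/
theorem cosh_center_of_mass_balance
    (n : ℕ) (hn : 0 < n) (p : Fin n → (Fin 3 → ℝ)) (hp : ∀ k, p k ∈ Hyp)
    (c : Fin 3 → ℝ) (hc : c = projH ((n : ℝ)⁻¹ • ∑ k, p k)) :
    c ∈ Hyp ∧
    (∑ k, Real.sinh (dH c (p k)) • unitTangent c (p k)) = 0 ∧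
    (∀ c' ∈ Hyp,
      (∑ k, Real.sinh (dH c' (p k)) • unitTangent c' (p k)) = 0 → c' = c) := by
  have : Nonempty (Fin n) := Fin.pos_iff_nonempty.mp hn
  rw [projH_smul_of_pos (by positivity)] at hc
  have hSS : mink (∑ k, p k) (∑ k, p k) < 0 := by
    rw [mink_sum_left]
    exact Finset.sum_neg (fun k _ => mink_sum_neg_of_mem_Hyp (hp k) hp) Finset.univ_nonempty
  have hS2 : 0 < (∑ k, p k) 2 := by
    rw [Finset.sum_apply]
    exact Finset.sum_pos (fun k _ => (hp k).2) Finset.univ_nonempty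
  have hcH : c ∈ Hyp := hc ▸ projH_mem_Hyp hSS hS2
  refine ⟨hcH, ?_, fun c' hc' hbal => ?_⟩
  · rw [sum_sinh_dH_smul_unitTangent hcH hp]
    exact (add_mink_smul_eq_zero_iff hcH (mink_sum_neg_of_mem_Hyp hcH hp)).mpr hc
  · rw [sum_sinh_dH_smul_unitTangent hc' hp] at hbal
    rw [hc]
    exact (add_mink_smul_eq_zero_iff hc' (mink_sum_neg_of_mem_Hyp hc' hp)).mp hbal
end
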